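/- Let G = ⟨S′|R′⟩ be the group given by the Section-5 modification. Then for every geodesic ray γ in G whose intersection function ρ_γ (with respect to R′) is sublinear, there exists an integer j ≥ 0 such that ρ_γ(t) ≤ log_N(t) + 2 + 2j for all t ≥ 1. (Hence the functions ρ_j(t) = log_N(t) + 2 + 2j form a sublinear exhaustion for (S′, R′), and by the results cited in the paper the Morse boundary of G is σ-compact, while by the previous statement not every Morse geodesic ray in Cay(G, S′) is strongly contracting; this proves the paper's Proposition 5.2 and Theorem A(3).) -/

import Mathlib

namespace SmallCancel

/-- A word over `S`: a finite sequence of letters from the symmetrized alphabet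
`S ∪ S⁻¹`, encoded as pairs `(s, b)` where `b = true` denotes the letter `s`
and `b = false` denotes its formal inverse `s⁻¹`. -/
abbrev Word (S : Type) := List (S × Bool)

/-- The formal inverse of a word. -/
def wInv {S : Type} (w : Word S) : Word S := (w.map fun a => (a.1, !a.2)).reverse

/-- A word is reduced if no letter is immediately followed by its inverse. -/
def Reduced {S : Type} (w : Word S) : Prop := w.Chain' fun a b => b ≠ (a.1, !a.2)

/-- A word is cyclically reduced if all of its cyclic shifts are reduced. -/
def CyclicallyReduced {S : Type} (w : Word S) : Prop := ∀ n, Reduced (w.rotate n)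

/-- `R̄`: the set of all cyclic shifts of elements of `R` and of their inverses. -/
def cyclicClosure {S : Type} (R : Set (Word S)) : Set (Word S) :=
  {w | ∃ r ∈ R, ∃ n, w = r.rotate n ∨ w = (wInv r).rotate n}

/-- `p` is a piece with respect to `R` if it is a prefix of two distinct elements
of `R̄`. -/
def IsPiece {S : Type} (R : Set (Word S)) (p : Word S) : Prop :=
  ∃ r₁ ∈ cyclicClosure R, ∃ r₂ ∈ cyclicClosure R, r₁ ≠ r₂ ∧ p <+: r₁ ∧ p <+: r₂

/-- The `C'(λ)` small-cancellation condition: every piece `p` that is a subword of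
some `r ∈ R̄` satisfies `|p| < λ|r|`. -/
def SmallCancellation {S : Type} (R : Set (Word S)) (lam : ℝ) : Prop :=
  ∀ p, IsPiece R p → ∀ r ∈ cyclicClosure R, p <:+: r →
    (p.length : ℝ) < lam * r.length

/-- The element of the presented group `⟨S | R⟩` represented by a word `w`. -/
def toPresented {S : Type} (R : Set (Word S)) (w : Word S) :
    PresentedGroup {g : FreeGroup S | ∃ r ∈ R, g = FreeGroup.mk r} :=
  QuotientGroup.mk (FreeGroup.mk w)

/-- A word `w` is geodesic if every word representing the same element of the
presented group `⟨S | R⟩` is at least as long as `w`. -/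
def IsGeodesicWord {S : Type} (R : Set (Word S)) (w : Word S) : Prop :=
  ∀ v : Word S, toPresented R v = toPresented R w → w.length ≤ v.length

/-- The finite prefix of length `n` of an infinite word `γ`. -/
def rayPrefix {S : Type} (γ : ℕ → S × Bool) (n : ℕ) : Word S := (List.range n).map γ

/-- A geodesic ray: an infinite word all of whose finite prefixes are geodesic. -/
def IsGeodesicRay {S : Type} (R : Set (Word S)) (γ : ℕ → S × Bool) : Prop :=
  ∀ n, IsGeodesicWord R (rayPrefix γ n)

/-- The intersection function of a ray `γ`:
`ρ_γ(t) = max{|w| : w is a subword of some r ∈ R̄ with |r| ≤ t and a subword of γ}`. -/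
noncomputable def intersectionFn {S : Type} (R : Set (Word S)) (γ : ℕ → S × Bool)
    (t : ℕ) : ℕ :=
  sSup {n | ∃ w : Word S, (∃ r ∈ cyclicClosure R, r.length ≤ t ∧ w <:+: r) ∧
    (∃ m, w <:+: rayPrefix γ m) ∧ w.length = n}

/-- A function is sublinear if `ρ(n)/n → 0`. -/
def Sublinear (ρ : ℕ → ℝ) : Prop :=
  Filter.Tendsto (fun n => ρ n / n) Filter.atTop (nhds 0)

/-- A weakly increasing function `f : ℕ → ℝ` is viable if `f(n) ≥ 6` for all `n`
and `f(n) → ∞`. -/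
def Viable (f : ℕ → ℝ) : Prop :=
  Monotone f ∧ (∀ n, 6 ≤ f n) ∧ Filter.Tendsto f Filter.atTop Filter.atTop

/-- The `C'(1/f)` small-cancellation condition for a set of relators: every piece `p`
that is a subword of some `r ∈ R̄` satisfies `|p| < |r|/f(|r|)`. -/
def CPrimeOverF {S : Type} (R : Set (Word S)) (f : ℕ → ℝ) : Prop :=
  ∀ p, IsPiece R p → ∀ r ∈ cyclicClosure R, p <:+: r →
    (p.length : ℝ) < (r.length : ℝ) / f r.length

/-- The pair `(x, R)` satisfies the `C'(1/f)` condition: every word `p` that is a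
subword both of `x` and of some `r ∈ R̄` satisfies `|p| < |r|/f(|r|)`. -/
def PairCPrimeOverF {S : Type} (x : Word S) (R : Set (Word S)) (f : ℕ → ℝ) : Prop :=
  ∀ p, p <:+: x → ∀ r ∈ cyclicClosure R, p <:+: r →
    (p.length : ℝ) < (r.length : ℝ) / f r.length

/-- The increasing partial small-cancellation condition (IPSC). -/
def IPSC {S : Type} (R : Set (Word S)) : Prop :=
  ∀ n : ℕ → ℕ, (∀ i, 0 < n i) → ∃ f : ℕ → ℝ, Viable f ∧
    ∀ K : ℕ, ∃ i, K ≤ i ∧ ∃ x y : Word S, x ++ y ∈ cyclicClosure R ∧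
      n i ≤ (x ++ y).length ∧ ((x ++ y).length : ℝ) / i ≤ x.length ∧
      PairCPrimeOverF x R f

end SmallCancel

namespace SmallCancel

/-- A word `w` of length `n` (with letters in `S`) is non-periodic if the `2n` words
obtained as cyclic shifts of `w` and of `w⁻¹` are pairwise distinct. -/
def NonPeriodic {S : Type} (w : Word S) : Prop :=
  Function.Injective fun p : Fin w.length × Bool =>
    if p.2 then w.rotate p.1 else (wInv w).rotate p.1

/-- The data of the Section-4 construction: an integer `N ≥ 28`, a positive multiple
`L` of `N`, and three distinct non-periodic positive words `r_1¹, r_2¹, r_3¹` of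
length `L` over `S` (indexed by `ZMod 3`, with the paper's index `i ∈ {1,2,3}` taken
modulo 3) satisfying the `C'(1/(4N))` small-cancellation condition, each given as the
concatenation of `N` blocks `y_(i,l)¹` of length `L/N`. -/
structure Section4Data (S : Type) where
  /-- the parameter `N ≥ 28` -/
  N : ℕ
  hN : 28 ≤ N
  /-- the length `L`, a positive multiple of `N` -/
  L : ℕ
  hdvd : N ∣ L
  hLpos : 0 < L
  /-- the blocks `y_(i,l)¹`, so that `r_i¹ = y_(i,1)¹ ⋯ y_(i,N)¹` -/
  y1 : ZMod 3 → Fin N → Word S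
  hlen : ∀ i l, (y1 i l).length = L / N
  /-- the level-1 relators use only letters of `S` (no inverse letters) -/
  hletters : ∀ i l, ∀ a ∈ y1 i l, a.2 = true
  /-- the three level-1 relators are pairwise distinct -/
  hdistinct : Function.Injective fun i : ZMod 3 => (List.ofFn fun l => y1 i l).flatten
  /-- the three level-1 relators are non-periodic -/
  hnonper : ∀ i : ZMod 3, NonPeriodic ((List.ofFn fun l => y1 i l).flatten)
  /-- the level-1 relators satisfy the `C'(1/(4N))` condition -/
  hsc : SmallCancellation
    {w | ∃ i : ZMod 3, w = (List.ofFn fun l => y1 i l).flatten} (1 / (4 * N))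

namespace Section4Data

variable {S : Type}

/-- The words `y_(i,l)^k` of the Section-4 construction, defined for levels `k ≥ 1`
by `y_(i,l)^{k+1} = ∏_{j=1}^{N} (y_(i,j)^k · y_(i+1,l)^k)` (the value at `k = 0` is
irrelevant and set to `y1`). -/
def y (D : Section4Data S) : ℕ → ZMod 3 → Fin D.N → Word S
  | 0 => D.y1
  | 1 => D.y1
  | (k + 2) => fun i l =>
      (List.ofFn fun j : Fin D.N => D.y (k + 1) i j ++ D.y (k + 1) (i + 1) l).flatten

/-- The relators `r_i^k = ∏_{j=1}^{N} y_(i,j)^k` (for `k = 1` this agrees with the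
given level-1 relators). -/
def r (D : Section4Data S) (k : ℕ) (i : ZMod 3) : Word S :=
  (List.ofFn fun j : Fin D.N => D.y k i j).flatten

/-- The set of relators `R = {r_i^k : 1 ≤ i ≤ 3, k ≥ 1}` of the Section-4
construction. -/
def R (D : Section4Data S) : Set (Word S) :=
  {w | ∃ k, 1 ≤ k ∧ ∃ i : ZMod 3, w = D.r k i}

end Section4Data

end SmallCancel

namespace SmallCancel

/-- Lift a word over `S` to a word over `S′ = S ∪ {a}`, encoded as `Option S` with
the new letter `a = none`. -/
def liftWord {S : Type} (w : Word S) : Word (Option S) :=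
  w.map fun a => (some a.1, a.2)

/-- The word `a^k` in the new letter `a = none`. -/
def aPow (S : Type) (k : ℕ) : Word (Option S) :=
  List.replicate k ((none : Option S), true)

namespace Section4Data

open Classical in
/-- The Section-5 modification of the relators: `r̃_i^k = r_i^k` for `i ∈ {1, 2}`,
while `r̃_3^k = r_3^k · a^k` if `k ≤ |r_3^k|/42` and `r̃_3^k = r_3^k` otherwise.
(The paper's index `3` is `(3 : ZMod 3)`.) -/
noncomputable def rt {S : Type} (D : Section4Data S) (k : ℕ) (i : ZMod 3) :
    Word (Option S) :=
  if i = (3 : ZMod 3) ∧ (k : ℝ) ≤ (D.r k i).length / 42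
  then liftWord (D.r k i) ++ aPow S k
  else liftWord (D.r k i)

/-- The Section-5 set of relators `R′ = {r̃_i^k : 1 ≤ i ≤ 3, k ≥ 1}`. -/
def R' {S : Type} (D : Section4Data S) : Set (Word (Option S)) :=
  {w | ∃ k, 1 ≤ k ∧ ∃ i : ZMod 3, w = D.rt k i}

end Section4Data

end SmallCancel

/-!
Sublinearity of `ρ_γ` gives a level `M` with `ρ_γ(|r^M| + M) < |y^M|`. Since every relator of
`R̄′` of level `M` has length at most `|r^M| + M`, no block `y_(α,β)^M` or its inverse occurs in
`γ`. For `k ≥ M` the relator `r_i^k` is a concatenation of level-`M` blocks, so `γ` shares fewer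
than `2|y^M| ≤ |r^M|` consecutive letters with it or its inverse; for `k ≤ M` the relator is
no longer than `|r^M|` anyway. A subword of a cyclic shift of `r̃_i^k = r_i^k a^e` (with `e ≤ k`)
meets `r_i^k` in at most two intervals and `a^e` in at most `k ≤ log_N |r̃_i^k|` letters, so
`ρ_γ(t) ≤ 2|r^M| + log_N t`.
-/

open scoped Computability

namespace List

variable {α : Type*}

theorem exists_rotate_append_comm (X Y : List α) (n : ℕ) :
    ∃ m, (Y ++ X).rotate n = (X ++ Y).rotate m := by
  obtain ⟨a, ha⟩ := isRotated_append (l := X) (l' := Y)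
  exact ⟨a + n, by rw [← ha, rotate_rotate]⟩

theorem exists_eq_append_of_infix_append {w X Y : List α} (h : w <:+: X ++ Y) :
    ∃ w₁ w₂, w = w₁ ++ w₂ ∧ w₁ <:+: X ∧ w₂ <:+: Y := by
  rcases infix_append_iff.1 h with hX | hY | ⟨w₁, w₂, rfl, h₁, h₂⟩
  · exact ⟨w, [], by simp, hX, nil_infix⟩
  · exact ⟨[], w, by simp, nil_infix, hY⟩
  · exact ⟨w₁, w₂, rfl, h₁.isInfix, h₂.isInfix⟩

theorem exists_eq_of_infix_rotate_append {w X Y : List α} {n : ℕ}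
    (h : w <:+: (X ++ Y).rotate n) :
    ∃ w₁ w₂ w₃ w₄, w = w₁ ++ w₂ ++ (w₃ ++ w₄) ∧ w₁ <:+: X ∧ w₃ <:+: X ∧
      w₂.length + w₄.length ≤ Y.length := by
  rw [rotate_eq_drop_append_take_mod, drop_append, take_append] at h
  obtain ⟨u, v, rfl, hu, hv⟩ := exists_eq_append_of_infix_append h
  obtain ⟨w₁, w₂, rfl, h₁, h₂⟩ := exists_eq_append_of_infix_append hu
  obtain ⟨w₃, w₄, rfl, h₃, h₄⟩ := exists_eq_append_of_infix_append hv
  refine ⟨w₁, w₂, w₃, w₄, rfl, h₁.trans (drop_suffix _ _).isInfix,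
    h₃.trans (take_prefix _ _).isInfix, ?_⟩
  have l₂ := h₂.length_le
  have l₄ := h₄.length_le
  simp only [length_drop, length_take] at l₂ l₄
  omega

theorem exists_mem_infix_of_infix_flatten {B : ℕ} (hB : 0 < B)
    {L : List (List α)} (hL : ∀ b ∈ L, b.length = B) {q : List α}
    (hq : q <:+: L.flatten) (hlen : 2 * B ≤ q.length) : ∃ b ∈ L, b <:+: q := by
  induction L with
  | nil =>
    have := hq.length_le
    simp only [flatten_nil, length_nil] at this
    omega
  | cons x L ih =>
    rw [flatten_cons, infix_append_iff] at hq
    rcases hq with hx | hL' | ⟨s, p, rfl, hs, hp⟩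
    · have := hx.length_le
      have := hL x mem_cons_self
      omega
    · obtain ⟨b, hb, hbq⟩ := ih (fun b hb => hL b (mem_cons_of_mem _ hb)) hL'
      exact ⟨b, mem_cons_of_mem _ hb, hbq⟩
    · have hsB : s.length ≤ B := hL x mem_cons_self ▸ hs.length_le
      rw [length_append] at hlen
      cases L with
      | nil =>
        have := hp.length_le
        simp only [flatten_nil, length_nil] at this
        omega
      | cons b L =>
        have hbB : b.length = B := hL b (by simp)
        have hbp : b <+: p := prefix_of_prefix_length_le (prefix_append _ _)
          (flatten_cons ▸ hp) (by omega)
        exact ⟨b, by simp, infix_append_of_infix_right hbp.isInfix⟩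

end List

namespace Language

variable {α : Type*}

theorem exists_mem_infix_of_infix_mem_kstar {l : Language α} {B : ℕ} (hB : 0 < B)
    (hl : ∀ b ∈ l, b.length = B) {x q : List α} (hx : x ∈ l∗) (hq : q <:+: x)
    (hlen : 2 * B ≤ q.length) : ∃ b ∈ l, b <:+: q := by
  obtain ⟨L, rfl, hL⟩ := mem_kstar.1 hx
  obtain ⟨b, hb, hbq⟩ :=
    List.exists_mem_infix_of_infix_flatten hB (fun b hb => hl b (hL b hb)) hq hlen
  exact ⟨b, hL b hb, hbq⟩

theorem append_mem_kstar {l : Language α} {x y : List α} (hx : x ∈ l∗)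
    (hy : y ∈ l∗) : x ++ y ∈ l∗ :=
  kstar_mul_kstar l ▸ mem_mul.2 ⟨x, hx, y, hy, rfl⟩

theorem flatten_mem_kstar {l : Language α} {L : List (List α)}
    (hL : ∀ x ∈ L, x ∈ l∗) : L.flatten ∈ l∗ :=
  kstar_idem l ▸ join_mem_kstar hL

end Language

namespace SmallCancel

variable {S : Type}

@[simp]
theorem wInv_length (w : Word S) : (wInv w).length = w.length := by
  simp [wInv]

@[simp]
theorem wInv_append (x y : Word S) : wInv (x ++ y) = wInv y ++ wInv x := by
  simp [wInv]

@[simp]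
theorem wInv_wInv (w : Word S) : wInv (wInv w) = w := by
  simp [wInv, Function.comp_def]

theorem wInv_flatten (L : List (Word S)) : wInv L.flatten = (L.map wInv).reverse.flatten := by
  induction L with
  | nil => rfl
  | cons x L ih => simp [ih]

theorem _root_.List.IsInfix.wInv {x y : Word S} (h : x <:+: y) : wInv x <:+: wInv y :=
  (h.map _).reverse

theorem exists_wInv_rotate_eq (w : Word S) (n : ℕ) :
    ∃ m, wInv (w.rotate n) = (wInv w).rotate m := by
  refine ⟨w.length - n % w.length, ?_⟩
  simp only [wInv, List.map_rotate, List.reverse_rotate, List.length_map]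

theorem wInv_mem_cyclicClosure {R : Set (Word S)} {w : Word S} (hw : w ∈ cyclicClosure R) :
    wInv w ∈ cyclicClosure R := by
  obtain ⟨r, hr, n, rfl | rfl⟩ := hw
  · obtain ⟨m, hm⟩ := exists_wInv_rotate_eq r n
    exact ⟨r, hr, m, Or.inr hm⟩
  · obtain ⟨m, hm⟩ := exists_wInv_rotate_eq (wInv r) n
    exact ⟨r, hr, m, Or.inl (by rw [hm, wInv_wInv])⟩

@[simp]
theorem liftWord_length (w : Word S) : (liftWord w).length = w.length := by
  simp [liftWord]

theorem liftWord_infix_liftWord {x y : Word S} (h : x <:+: y) : liftWord x <:+: liftWord y :=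
  h.map _

@[simp]
theorem aPow_length (k : ℕ) : (aPow S k).length = k := by
  simp [aPow]

theorem liftWord_mem_kstar {l : Language (S × Bool)} {l' : Language (Option S × Bool)}
    (h : ∀ b ∈ l, liftWord b ∈ l') {x : Word S} (hx : x ∈ l∗) : liftWord x ∈ l'∗ := by
  obtain ⟨L, rfl, hL⟩ := Language.mem_kstar.1 hx
  rw [show liftWord L.flatten = (L.map liftWord).flatten from List.map_flatten ..]
  exact Language.join_mem_kstar (List.forall_mem_map.2 fun b hb => h b (hL b hb))

theorem wInv_mem_kstar {l l' : Language (S × Bool)} (h : ∀ b ∈ l, wInv b ∈ l') {x : Word S}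
    (hx : x ∈ l∗) : wInv x ∈ l'∗ := by
  obtain ⟨L, rfl, hL⟩ := Language.mem_kstar.1 hx
  rw [wInv_flatten]
  refine Language.join_mem_kstar fun y hy => ?_
  obtain ⟨b, hb, rfl⟩ := List.mem_map.1 (List.mem_reverse.1 hy)
  exact h b (hL b hb)

def IsRelatorSubword (R : Set (Word S)) (t : ℕ) (w : Word S) : Prop :=
  ∃ r ∈ cyclicClosure R, r.length ≤ t ∧ w <:+: r

def IsRaySubword (γ : ℕ → S × Bool) (w : Word S) : Prop :=
  ∃ m, w <:+: rayPrefix γ m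

theorem IsRelatorSubword.wInv {R : Set (Word S)} {t : ℕ} {w : Word S}
    (h : IsRelatorSubword R t w) : IsRelatorSubword R t (wInv w) := by
  obtain ⟨r, hr, hrt, hwr⟩ := h
  exact ⟨SmallCancel.wInv r, wInv_mem_cyclicClosure hr, (wInv_length r).trans_le hrt, hwr.wInv⟩

theorem IsRaySubword.mono {γ : ℕ → S × Bool} {v w : Word S} (hw : IsRaySubword γ w)
    (hvw : v <:+: w) : IsRaySubword γ v :=
  hw.imp fun _ h => hvw.trans h

theorem length_le_intersectionFn {R : Set (Word S)} {γ : ℕ → S × Bool} {t : ℕ} {w : Word S}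
    (hR : IsRelatorSubword R t w) (hγ : IsRaySubword γ w) :
    w.length ≤ intersectionFn R γ t := by
  refine le_csSup ⟨t, ?_⟩ ⟨w, hR, hγ, rfl⟩
  rintro _ ⟨v, ⟨r, -, hrt, hvr⟩, -, rfl⟩
  exact hvr.length_le.trans hrt

theorem intersectionFn_le {R : Set (Word S)} {γ : ℕ → S × Bool} {t n : ℕ}
    (h : ∀ w, IsRelatorSubword R t w → IsRaySubword γ w → w.length ≤ n) :
    intersectionFn R γ t ≤ n := by
  refine csSup_le' ?_
  rintro _ ⟨w, hR, hγ, rfl⟩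
  exact h w hR hγ

theorem Sublinear.eventually_lt_mul {ρ : ℕ → ℝ} (h : Sublinear ρ) {ε : ℝ} (hε : 0 < ε) :
    ∀ᶠ n : ℕ in Filter.atTop, ρ n < ε * n := by
  filter_upwards [h.eventually (gt_mem_nhds hε), Filter.eventually_gt_atTop 0] with n hn hpos
  exact (div_lt_iff₀ (Nat.cast_pos.2 hpos)).1 hn

namespace Section4Data

variable (D : Section4Data S)

/-- The common length of the words `y_(i,l)^k` (for `k ≥ 1`). -/
def blockLength (k : ℕ) : ℕ := (2 * D.N) ^ (k - 1) * (D.L / D.N)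

def relatorLength (k : ℕ) : ℕ := D.N * D.blockLength k

theorem one_lt_N : 1 < D.N := by
  have := D.hN
  omega

theorem L_div_N_pos : 0 < D.L / D.N :=
  Nat.div_pos (Nat.le_of_dvd D.hLpos D.hdvd) (by have := D.one_lt_N; omega)

theorem blockLength_pos (k : ℕ) : 0 < D.blockLength k :=
  Nat.mul_pos (Nat.pow_pos (by have := D.one_lt_N; omega)) D.L_div_N_pos

theorem blockLength_succ {k : ℕ} (hk : 1 ≤ k) :
    D.blockLength (k + 1) = 2 * D.N * D.blockLength k := by
  obtain ⟨k, rfl⟩ := Nat.exists_eq_add_of_le' hk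
  simp only [blockLength, Nat.add_sub_cancel, pow_succ]
  ring

theorem relatorLength_mono : Monotone D.relatorLength := fun _ _ h =>
  Nat.mul_le_mul_left _ <| Nat.mul_le_mul_right _ <|
    Nat.pow_le_pow_right (by have := D.one_lt_N; omega) (by omega)

theorem two_mul_blockLength_le (k : ℕ) : 2 * D.blockLength k ≤ D.relatorLength k :=
  Nat.mul_le_mul_right _ D.one_lt_N

theorem pow_le_relatorLength (k : ℕ) : D.N ^ k ≤ D.relatorLength k := by
  have hN : D.N ^ k ≤ D.N * D.N ^ (k - 1) := by
    rcases k with _ | k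
    · simpa using D.one_lt_N.le
    · simp [pow_succ']
  refine hN.trans (Nat.mul_le_mul_left _ ?_)
  exact (Nat.pow_le_pow_left (by omega) _).trans (Nat.le_mul_of_pos_right _ D.L_div_N_pos)

theorem le_relatorLength (k : ℕ) : k ≤ D.relatorLength k :=
  (Nat.lt_pow_self D.one_lt_N).le.trans (D.pow_le_relatorLength k)

theorem y_succ {k : ℕ} (hk : 1 ≤ k) (i : ZMod 3) (l : Fin D.N) :
    D.y (k + 1) i l = (List.ofFn fun j => D.y k i j ++ D.y k (i + 1) l).flatten := by
  obtain ⟨k, rfl⟩ := Nat.exists_eq_add_of_le' hk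
  rfl

theorem y_length {k : ℕ} (hk : 1 ≤ k) (i : ZMod 3) (l : Fin D.N) :
    (D.y k i l).length = D.blockLength k := by
  induction k, hk using Nat.le_induction generalizing i l with
  | base => simp [y, blockLength, D.hlen]
  | succ k hk ih =>
    simp only [D.y_succ hk, List.length_flatten, List.map_ofFn, List.sum_ofFn,
      Function.comp_apply, List.length_append, ih, Finset.sum_const, Finset.card_univ,
      Fintype.card_fin, smul_eq_mul, D.blockLength_succ hk]
    ring

theorem r_length {k : ℕ} (hk : 1 ≤ k) (i : ZMod 3) : (D.r k i).length = D.relatorLength k := by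
  simp [r, List.length_flatten, List.sum_ofFn, D.y_length hk, relatorLength]

theorem y_infix_r (k : ℕ) (i : ZMod 3) (l : Fin D.N) : D.y k i l <:+: D.r k i :=
  List.infix_of_mem_flatten (List.mem_ofFn.2 ⟨l, rfl⟩)

def blocks (M : ℕ) : Language (S × Bool) := {b | ∃ i l, b = D.y M i l}

theorem y_mem_kstar_blocks {M k : ℕ} (hMk : M ≤ k) (hM : 1 ≤ M) (i : ZMod 3) (l : Fin D.N) :
    D.y k i l ∈ (D.blocks M)∗ := by
  induction k, hMk using Nat.le_induction generalizing i l with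
  | base => exact le_kstar (a := D.blocks M) ⟨i, l, rfl⟩
  | succ k hk ih =>
    rw [D.y_succ (hM.trans hk)]
    refine Language.flatten_mem_kstar fun x hx => ?_
    obtain ⟨j, rfl⟩ := List.mem_ofFn.1 hx
    exact Language.append_mem_kstar (ih i j) (ih _ l)

theorem r_mem_kstar_blocks {M k : ℕ} (hMk : M ≤ k) (hM : 1 ≤ M) (i : ZMod 3) :
    D.r k i ∈ (D.blocks M)∗ := by
  refine Language.flatten_mem_kstar fun x hx => ?_
  obtain ⟨l, rfl⟩ := List.mem_ofFn.1 hx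
  exact D.y_mem_kstar_blocks hMk hM i l

theorem exists_rt_eq (k : ℕ) (i : ZMod 3) :
    ∃ e ≤ k, D.rt k i = liftWord (D.r k i) ++ aPow S e := by
  unfold rt
  split
  · exact ⟨k, le_rfl, rfl⟩
  · exact ⟨0, Nat.zero_le _, by simp [aPow]⟩

theorem rt_length_le {k : ℕ} (hk : 1 ≤ k) (i : ZMod 3) :
    (D.rt k i).length ≤ D.relatorLength k + k := by
  obtain ⟨e, he, h⟩ := D.exists_rt_eq k i
  simp [h, D.r_length hk, he]

theorem rt_mem_cyclicClosure {k : ℕ} (hk : 1 ≤ k) (i : ZMod 3) :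
    D.rt k i ∈ cyclicClosure D.R' :=
  ⟨D.rt k i, ⟨k, hk, i, rfl⟩, 0, Or.inl (List.rotate_zero _).symm⟩

def liftedRelators (k : ℕ) : Set (Word (Option S)) :=
  {X | ∃ i, X = liftWord (D.r k i) ∨ X = wInv (liftWord (D.r k i))}

theorem length_of_mem_liftedRelators {k : ℕ} (hk : 1 ≤ k) {X : Word (Option S)}
    (hX : X ∈ D.liftedRelators k) : X.length = D.relatorLength k := by
  obtain ⟨i, rfl | rfl⟩ := hX <;> simp [D.r_length hk]

theorem exists_eq_rotate_of_mem_cyclicClosure {w : Word (Option S)}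
    (hw : w ∈ cyclicClosure D.R') :
    ∃ k, 1 ≤ k ∧ ∃ X ∈ D.liftedRelators k, ∃ (Y : Word (Option S)) (n : ℕ),
      Y.length ≤ k ∧ w = (X ++ Y).rotate n := by
  obtain ⟨_, ⟨k, hk, i, rfl⟩, n, rfl | rfl⟩ := hw <;>
    obtain ⟨e, he, hrt⟩ := D.exists_rt_eq k i <;> rw [hrt]
  · exact ⟨k, hk, _, ⟨i, Or.inl rfl⟩, aPow S e, n, by simpa using he, rfl⟩
  · obtain ⟨m, hm⟩ :=
      List.exists_rotate_append_comm (wInv (liftWord (D.r k i))) (wInv (aPow S e)) n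
    exact ⟨k, hk, _, ⟨i, Or.inr rfl⟩, wInv (aPow S e), m, by simpa using he,
      by rw [wInv_append, hm]⟩

/-- `|r^M| + M` bounds the lengths of the relators `r̃_i^M`. -/
def shortBlocks (M : ℕ) : Language (Option S × Bool) :=
  {b | b.length = D.blockLength M ∧ IsRelatorSubword D.R' (D.relatorLength M + M) b}

theorem mem_kstar_shortBlocks {M k : ℕ} (hMk : M ≤ k) (hM : 1 ≤ M) {X : Word (Option S)}
    (hX : X ∈ D.liftedRelators k) : X ∈ (D.shortBlocks M)∗ := by
  obtain ⟨i, hX⟩ := hX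
  have hlift : liftWord (D.r k i) ∈ (D.shortBlocks M)∗ := by
    refine liftWord_mem_kstar ?_ (D.r_mem_kstar_blocks hMk hM i)
    rintro _ ⟨α, β, rfl⟩
    obtain ⟨e, -, hrt⟩ := D.exists_rt_eq M α
    refine ⟨by simp [D.y_length hM], D.rt M α, D.rt_mem_cyclicClosure hM α,
      D.rt_length_le hM α, ?_⟩
    exact (liftWord_infix_liftWord (D.y_infix_r M α β)).trans (hrt ▸ List.infix_append_left)
  rcases hX with rfl | rfl
  · exact hlift
  · exact wInv_mem_kstar (fun b hb => show _ ∧ _ from ⟨by simpa using hb.1, hb.2.wInv⟩) hlift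

variable {γ : ℕ → Option S × Bool} {M : ℕ}

theorem length_le_relatorLength_of_infix (hM : 1 ≤ M)
    (hρ : intersectionFn D.R' γ (D.relatorLength M + M) < D.blockLength M)
    {k : ℕ} (hk : 1 ≤ k) {X q : Word (Option S)} (hX : X ∈ D.liftedRelators k)
    (hq : IsRaySubword γ q) (hqX : q <:+: X) : q.length ≤ D.relatorLength M := by
  rcases le_or_gt k M with hkM | hMk
  · exact hqX.length_le.trans
      ((D.length_of_mem_liftedRelators hk hX).trans_le (D.relatorLength_mono hkM))
  by_contra! hlong
  obtain ⟨b, ⟨hblen, hb⟩, hbq⟩ :=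
    Language.exists_mem_infix_of_infix_mem_kstar (D.blockLength_pos M) (fun b hb => hb.1)
      (D.mem_kstar_shortBlocks hMk.le hM hX) hqX ((D.two_mul_blockLength_le M).trans hlong.le)
  have := length_le_intersectionFn hb (hq.mono hbq)
  omega

theorem length_le_of_isRelatorSubword (hM : 1 ≤ M)
    (hρ : intersectionFn D.R' γ (D.relatorLength M + M) < D.blockLength M)
    {t : ℕ} {w : Word (Option S)} (hw : IsRelatorSubword D.R' t w) (hγ : IsRaySubword γ w) :
    w.length ≤ 2 * D.relatorLength M + Nat.log D.N t := by
  obtain ⟨r, hr, hrt, hwr⟩ := hw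
  obtain ⟨k, hk, X, hX, Y, n, hY, rfl⟩ := D.exists_eq_rotate_of_mem_cyclicClosure hr
  obtain ⟨w₁, w₂, w₃, w₄, rfl, h₁, h₃, h₂₄⟩ := List.exists_eq_of_infix_rotate_append hwr
  have hw₁ := D.length_le_relatorLength_of_infix hM hρ hk hX
    (hγ.mono (List.infix_append_left.trans List.infix_append_left)) h₁
  have hw₃ := D.length_le_relatorLength_of_infix hM hρ hk hX
    (hγ.mono (List.infix_append_left.trans List.infix_append_right)) h₃
  have hkt : k ≤ Nat.log D.N t := by
    refine Nat.le_log_of_pow_le D.one_lt_N ((D.pow_le_relatorLength k).trans ?_)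
    have hXlen := D.length_of_mem_liftedRelators hk hX
    rw [List.length_rotate, List.length_append] at hrt
    omega
  simp only [List.length_append]
  omega

theorem exists_intersectionFn_lt_blockLength
    (hsub : Sublinear fun t => (intersectionFn D.R' γ t : ℝ)) :
    ∃ M, 1 ≤ M ∧ intersectionFn D.R' γ (D.relatorLength M + M) < D.blockLength M := by
  have hN : (0 : ℝ) < D.N := by exact_mod_cast D.one_lt_N.le
  have hTtop : Filter.Tendsto (fun M => D.relatorLength M + M) Filter.atTop Filter.atTop :=
    Filter.tendsto_atTop_mono (fun M => Nat.le_add_left M _) Filter.tendsto_id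
  obtain ⟨M, hM, hlt⟩ := (Filter.eventually_ge_atTop 1).and
    (hTtop.eventually (hsub.eventually_lt_mul (ε := (2 * D.N)⁻¹) (by positivity))) |>.exists
  refine ⟨M, hM, ?_⟩
  have hTle : D.relatorLength M + M ≤ 2 * D.N * D.blockLength M := by
    rw [mul_assoc, ← relatorLength]
    linarith [D.le_relatorLength M]
  have hTR : ((D.relatorLength M + M : ℕ) : ℝ) ≤ 2 * D.N * D.blockLength M := by
    exact_mod_cast hTle
  have := hlt.trans_le (mul_le_mul_of_nonneg_left hTR (by positivity))
  rw [inv_mul_cancel_left₀ (by positivity)] at this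
  exact_mod_cast this

theorem exists_intersectionFn_le_add_log
    (hsub : Sublinear fun t => (intersectionFn D.R' γ t : ℝ)) :
    ∃ C, ∀ t, intersectionFn D.R' γ t ≤ 2 * C + Nat.log D.N t := by
  obtain ⟨M, hM, hρ⟩ := D.exists_intersectionFn_lt_blockLength hsub
  exact ⟨D.relatorLength M, fun t =>
    intersectionFn_le fun w hw hγ => D.length_le_of_isRelatorSubword hM hρ hw hγ⟩

end Section4Data

end SmallCancel

open SmallCancel Section4Data

theorem section5_sublinear_exhaustion_general {S : Type}
    (D : Section4Data S) (γ : ℕ → Option S × Bool)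
    (hsub : Sublinear fun t => (intersectionFn D.R' γ t : ℝ)) :
    ∃ j : ℕ, ∀ t : ℕ, 1 ≤ t →
      (intersectionFn D.R' γ t : ℝ) ≤ Real.logb D.N t + 2 + 2 * j := by
  obtain ⟨j, hj⟩ := D.exists_intersectionFn_le_add_log hsub
  refine ⟨j, fun t _ => ?_⟩
  calc (intersectionFn D.R' γ t : ℝ) ≤ 2 * j + Nat.log D.N t := by exact_mod_cast hj t
    _ ≤ Real.logb D.N t + 2 + 2 * j := by linarith [Real.natLog_le_logb t D.N]

/-- second part of Proposition 5.2 of the paper. Let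
`G = ⟨S′|R′⟩` be the group of the Section-5 modification. For every geodesic ray `γ`
in `G` whose intersection function `ρ_γ` (with respect to `R′`) is sublinear, there
exists `j ≥ 0` such that `ρ_γ(t) ≤ log_N(t) + 2 + 2j` for all `t ≥ 1`. (Hence the
functions `ρ_j(t) = log_N(t) + 2 + 2j` form a sublinear exhaustion for `(S′, R′)`,
so the Morse boundary of `G` is σ-compact, while not every Morse geodesic ray in
`Cay(G, S′)` is strongly contracting: Theorem A(3).) -/
theorem section5_sublinear_exhaustion {S : Type} [Finite S]
    (D : Section4Data S) (γ : ℕ → Option S × Bool)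
    (hgeo : IsGeodesicRay D.R' γ)
    (hsub : Sublinear fun t => (intersectionFn D.R' γ t : ℝ)) :
    ∃ j : ℕ, ∀ t : ℕ, 1 ≤ t →
      (intersectionFn D.R' γ t : ℝ) ≤ Real.logb D.N t + 2 + 2 * j :=
  section5_sublinear_exhaustion_general D γ hsub
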